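/- Let s and f be nonnegative integrable functions on a measure space (E, M). Define ζ(x,y) = (1/√2)(√(y/(x+y)) − √(x/(x+y))) for x,y ≥ 0 (with 0/0 = 0), and H²(u,v) = (1/2)∫(√u − √v)² dM. Then for all nonnegative integrables f, f': ∫_E ζ²(f, f')·s dM ≤ H²(s,f) + H²(s,f') + H²(f,f'). -/
import Mathlib


open MeasureTheory

/-- The function `ζ(x,y) = (1/√2)(√(y/(x+y)) − √(x/(x+y)))`, with the convention `0/0 = 0`. -/
noncomputable def zeta (x y : ℝ) : ℝ :=
  (1 / Real.sqrt 2) * (Real.sqrt (y / (x + y)) - Real.sqrt (x / (x + y)))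

/-- The Hellinger-type squared distance `H²(u,v) = (1/2)∫(√u − √v)² dM`. -/
noncomputable def Hsq {E : Type*} [MeasurableSpace E] (M : Measure E) (u v : E → ℝ) : ℝ :=
  (1/2) * ∫ x, (Real.sqrt (u x) - Real.sqrt (v x)) ^ 2 ∂M

lemma zeta_sq_mul_le (x y t : ℝ) (hx : 0 ≤ x) (hy : 0 ≤ y) (ht : 0 ≤ t) :
    zeta x y ^ 2 * t ≤ (1/2) * ((Real.sqrt t - Real.sqrt x) ^ 2
      + (Real.sqrt t - Real.sqrt y) ^ 2 + (Real.sqrt x - Real.sqrt y) ^ 2) := by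
  have hRHS : 0 ≤ (Real.sqrt t - Real.sqrt x) ^ 2
      + (Real.sqrt t - Real.sqrt y) ^ 2 + (Real.sqrt x - Real.sqrt y) ^ 2 := by positivity
  rcases eq_or_lt_of_le (by positivity : (0:ℝ) ≤ x + y) with h0 | hpos
  · have hx0 : x = 0 := by linarith [hx, hy]
    have hy0 : y = 0 := by linarith [hx, hy]
    subst hx0; subst hy0
    simp [zeta]
  · have hsq2 : (1 / Real.sqrt 2) ^ 2 = 1 / 2 := by
      rw [div_pow, Real.sq_sqrt (by norm_num : (0:ℝ) ≤ 2)]; norm_num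
    have hzy : Real.sqrt (y / (x + y)) = Real.sqrt y / Real.sqrt (x + y) :=
      Real.sqrt_div' y hpos.le ▸ (Real.sqrt_div hy (x + y))
    have hzx : Real.sqrt (x / (x + y)) = Real.sqrt x / Real.sqrt (x + y) :=
      Real.sqrt_div hx (x + y)
    have hspos : 0 < Real.sqrt (x + y) := Real.sqrt_pos.mpr hpos
    have hz : zeta x y ^ 2 * t
        = (1/2) * ((Real.sqrt y - Real.sqrt x) ^ 2 * Real.sqrt t ^ 2) / (x + y) := by
      rw [zeta, mul_pow, hsq2, hzy, hzx, div_sub_div_same, div_pow,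
        Real.sq_sqrt hpos.le, Real.sq_sqrt ht]
      ring
    rw [hz]
    rw [div_le_iff₀ hpos]
    have key : ∀ u v w : ℝ, 0 ≤ u → 0 ≤ v →
        w ^ 2 * (v - u) ^ 2 ≤ ((w - u) ^ 2 + (w - v) ^ 2 + (u - v) ^ 2) * (u ^ 2 + v ^ 2) := by
      intro u v w hu hv
      nlinarith [sq_nonneg (w*u - w*v), sq_nonneg (w*v - u*v - u*u + w*u), sq_nonneg (u*v - w*u),
        sq_nonneg (u*v - w*v), sq_nonneg (w - u), sq_nonneg (w - v), sq_nonneg (u - v),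
        mul_nonneg hu hv, mul_nonneg (sq_nonneg w) (mul_nonneg hu hv),
        sq_nonneg (w*u + w*v - 2*u*v)]
    have hkey := key (Real.sqrt x) (Real.sqrt y) (Real.sqrt t)
      (Real.sqrt_nonneg x) (Real.sqrt_nonneg y)
    rw [Real.sq_sqrt hx, Real.sq_sqrt hy] at hkey
    nlinarith [hkey]

lemma sqrt_sub_sq_integrable {E : Type*} [MeasurableSpace E] {M : Measure E}
    {u v : E → ℝ} (hu0 : ∀ x, 0 ≤ u x) (hv0 : ∀ x, 0 ≤ v x)
    (hu : Integrable u M) (hv : Integrable v M) :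
    Integrable (fun x => (Real.sqrt (u x) - Real.sqrt (v x)) ^ 2) M := by
  have hm : AEStronglyMeasurable (fun x => (Real.sqrt (u x) - Real.sqrt (v x)) ^ 2) M := by
    exact (((Real.continuous_sqrt.comp_aestronglyMeasurable hu.1).sub
      (Real.continuous_sqrt.comp_aestronglyMeasurable hv.1)).pow 2)
  refine (hu.add hv).mono' hm (Filter.Eventually.of_forall fun x => ?_)
  simp only [Pi.add_apply]
  have h1 : (Real.sqrt (u x) - Real.sqrt (v x)) ^ 2 ≤ u x + v x := by
    have := Real.sqrt_nonneg (u x)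
    have := Real.sqrt_nonneg (v x)
    have hux := Real.sq_sqrt (hu0 x)
    have hvx := Real.sq_sqrt (hv0 x)
    nlinarith [mul_nonneg (Real.sqrt_nonneg (u x)) (Real.sqrt_nonneg (v x))]
  rw [Real.norm_eq_abs, abs_of_nonneg (sq_nonneg _)]
  exact h1

theorem stmt_18 {E : Type*} [MeasurableSpace E] (M : Measure E)
    (s f f' : E → ℝ)
    (hs0 : ∀ x, 0 ≤ s x) (hf0 : ∀ x, 0 ≤ f x) (hf'0 : ∀ x, 0 ≤ f' x)
    (hs : Integrable s M) (hf : Integrable f M) (hf' : Integrable f' M) :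
    ∫ x, (zeta (f x) (f' x)) ^ 2 * s x ∂M
      ≤ Hsq M s f + Hsq M s f' + Hsq M f f' := by
  have hA := sqrt_sub_sq_integrable hs0 hf0 hs hf
  have hB := sqrt_sub_sq_integrable hs0 hf'0 hs hf'
  have hC := sqrt_sub_sq_integrable hf0 hf'0 hf hf'
  set g : E → ℝ := fun x => (1/2) * ((Real.sqrt (s x) - Real.sqrt (f x)) ^ 2
      + (Real.sqrt (s x) - Real.sqrt (f' x)) ^ 2
      + (Real.sqrt (f x) - Real.sqrt (f' x)) ^ 2) with hg
  have hgint : Integrable g M := (((hA.add hB).add hC).const_mul (1/2))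
  have hbound : ∀ x, zeta (f x) (f' x) ^ 2 * s x ≤ g x := fun x => by
    have h := zeta_sq_mul_le (f x) (f' x) (s x) (hf0 x) (hf'0 x) (hs0 x)
    simpa [hg] using h
  have hmeas : AEStronglyMeasurable (fun x => zeta (f x) (f' x) ^ 2 * s x) M := by
    have hfm := hf.1.aemeasurable
    have hfm' := hf'.1.aemeasurable
    have h1 : AEMeasurable (fun x => zeta (f x) (f' x)) M := by
      simp only [zeta]
      exact (((Real.continuous_sqrt.measurable.comp_aemeasurable (hfm'.div (hfm.add hfm'))).sub
        (Real.continuous_sqrt.measurable.comp_aemeasurable (hfm.div (hfm.add hfm')))).const_mul _)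
    exact (((h1.pow_const 2).mul hs.1.aemeasurable).aestronglyMeasurable)
  have hLint : Integrable (fun x => zeta (f x) (f' x) ^ 2 * s x) M := by
    refine hgint.mono' hmeas (Filter.Eventually.of_forall fun x => ?_)
    rw [Real.norm_eq_abs, abs_of_nonneg (mul_nonneg (sq_nonneg _) (hs0 x))]
    exact hbound x
  have hle : ∫ x, zeta (f x) (f' x) ^ 2 * s x ∂M ≤ ∫ x, g x ∂M :=
    integral_mono hLint hgint hbound
  refine hle.trans (le_of_eq ?_)
  rw [hg]
  simp only [integral_const_mul]
  have hAB : Integrable (fun a => (Real.sqrt (s a) - Real.sqrt (f a)) ^ 2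
      + (Real.sqrt (s a) - Real.sqrt (f' a)) ^ 2) M := hA.add hB
  rw [integral_add hAB hC, integral_add hA hB]
  simp only [Hsq]
  ring
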